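/- In the quantum spatial ageing algebra A, the elements t := YX and u := Yφ (with φ = EY − qYE) commute with K and satisfy tu = q^2·ut. -/

import Mathlib

/-- Generators of the quantum spatial ageing algebra. -/
inductive QGen : Type
  | E | K | Kinv | X | Y

open FreeAlgebra in
/-- Defining relations of the quantum spatial ageing algebra
`EK = q⁻²KE`, `XK = q⁻¹KX`, `YK = qKY`, `EX = qXE`, `EY = X + q⁻¹YE`, `qYX = XY`,
together with `K K⁻¹ = K⁻¹ K = 1`. -/
inductive QSARel (k : Type) [Field k] (q : k) :
    FreeAlgebra k QGen → FreeAlgebra k QGen → Prop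
  | KKinv : QSARel k q (ι k QGen.K * ι k QGen.Kinv) 1
  | KinvK : QSARel k q (ι k QGen.Kinv * ι k QGen.K) 1
  | EK : QSARel k q (ι k QGen.E * ι k QGen.K) ((q ^ 2)⁻¹ • (ι k QGen.K * ι k QGen.E))
  | XK : QSARel k q (ι k QGen.X * ι k QGen.K) (q⁻¹ • (ι k QGen.K * ι k QGen.X))
  | YK : QSARel k q (ι k QGen.Y * ι k QGen.K) (q • (ι k QGen.K * ι k QGen.Y))
  | EX : QSARel k q (ι k QGen.E * ι k QGen.X) (q • (ι k QGen.X * ι k QGen.E))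
  | EY : QSARel k q (ι k QGen.E * ι k QGen.Y)
      (ι k QGen.X + q⁻¹ • (ι k QGen.Y * ι k QGen.E))
  | YX : QSARel k q (q • (ι k QGen.Y * ι k QGen.X)) (ι k QGen.X * ι k QGen.Y)

/-- The quantum spatial ageing algebra `𝒜 = 𝕂_q[X,Y] ⋊ U_q^{≥0}(sl₂)`. -/
noncomputable abbrev QSA (k : Type) [Field k] (q : k) : Type := RingQuot (QSARel k q)

noncomputable def Egen (k : Type) [Field k] (q : k) : QSA k q :=
  RingQuot.mkAlgHom k (QSARel k q) (FreeAlgebra.ι k QGen.E)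
noncomputable def Kgen (k : Type) [Field k] (q : k) : QSA k q :=
  RingQuot.mkAlgHom k (QSARel k q) (FreeAlgebra.ι k QGen.K)
noncomputable def Kinvgen (k : Type) [Field k] (q : k) : QSA k q :=
  RingQuot.mkAlgHom k (QSARel k q) (FreeAlgebra.ι k QGen.Kinv)
noncomputable def Xgen (k : Type) [Field k] (q : k) : QSA k q :=
  RingQuot.mkAlgHom k (QSARel k q) (FreeAlgebra.ι k QGen.X)
noncomputable def Ygen (k : Type) [Field k] (q : k) : QSA k q :=
  RingQuot.mkAlgHom k (QSARel k q) (FreeAlgebra.ι k QGen.Y)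

/-- The normal element `φ = EY - qYE`. -/
noncomputable def phi (k : Type) [Field k] (q : k) : QSA k q :=
  Egen k q * Ygen k q - q • (Ygen k q * Egen k q)

/-! Write `a ⋈_c b` for `a b = c • b a`; such factors multiply along products. The relations give
`X ⋈_{q⁻¹} K`, `Y ⋈_q K`, `E ⋈_{q⁻²} K`, `X ⋈_q Y`, and `φ = X + (q⁻¹ - q) Y E` then satisfies
`φ ⋈_{q⁻¹} K`, `φ ⋈_1 X`, `φ ⋈_{q⁻¹} Y`. Hence `t = YX` and `u = Yφ` both get the factor
`q q⁻¹ = 1` against `K`, while `t ⋈_q Y` and `t ⋈_q φ` give `t ⋈_{q²} u`. -/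

def SkewCommute {R A : Type*} [CommSemiring R] [Semiring A] [Algebra R A] (c : R) (a b : A) :
    Prop :=
  a * b = c • (b * a)

namespace SkewCommute

variable {R A : Type*} [CommSemiring R] [Semiring A] [Algebra R A] {α β : R} {a b c : A}

variable (R) in
theorem refl (a : A) : SkewCommute (1 : R) a a := (one_smul R _).symm

theorem commute (h : SkewCommute (1 : R) a b) : Commute a b := h.trans (one_smul R _)

theorem symm (h : SkewCommute α a b) (hαβ : α * β = 1) : SkewCommute β b a := by
  rw [SkewCommute, h, smul_smul, mul_comm, hαβ, one_smul]

theorem mul_left (ha : SkewCommute α a c) (hb : SkewCommute β b c) :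
    SkewCommute (α * β) (a * b) c := by
  rw [SkewCommute, mul_assoc, hb, mul_smul_comm, ← mul_assoc, ha, smul_mul_assoc, smul_smul,
    mul_comm β, mul_assoc]

theorem mul_right (hb : SkewCommute α a b) (hc : SkewCommute β a c) :
    SkewCommute (α * β) a (b * c) := by
  rw [SkewCommute, ← mul_assoc, hb, smul_mul_assoc, mul_assoc, hc, mul_smul_comm, smul_smul,
    mul_assoc]

theorem add_left (ha : SkewCommute α a c) (hb : SkewCommute α b c) :
    SkewCommute α (a + b) c := by
  rw [SkewCommute, add_mul, ha, hb, mul_add, smul_add]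

theorem smul_left (h : SkewCommute α a b) (r : R) : SkewCommute α (r • a) b := by
  rw [SkewCommute, smul_mul_assoc, h, mul_smul_comm, smul_comm]

end SkewCommute

section QuantumSpatialAgeing

variable {k : Type} [Field k] {q : k}

theorem Xgen_skewCommute_Kgen : SkewCommute q⁻¹ (Xgen k q) (Kgen k q) := by
  simpa [SkewCommute, Xgen, Kgen] using RingQuot.mkAlgHom_rel k (QSARel.XK (k := k) (q := q))

theorem Ygen_skewCommute_Kgen : SkewCommute q (Ygen k q) (Kgen k q) := by
  simpa [SkewCommute, Ygen, Kgen] using RingQuot.mkAlgHom_rel k (QSARel.YK (k := k) (q := q))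

theorem Egen_skewCommute_Kgen : SkewCommute (q ^ 2)⁻¹ (Egen k q) (Kgen k q) := by
  simpa [SkewCommute, Egen, Kgen] using RingQuot.mkAlgHom_rel k (QSARel.EK (k := k) (q := q))

theorem Egen_skewCommute_Xgen : SkewCommute q (Egen k q) (Xgen k q) := by
  simpa [SkewCommute, Egen, Xgen] using RingQuot.mkAlgHom_rel k (QSARel.EX (k := k) (q := q))

theorem Xgen_skewCommute_Ygen : SkewCommute q (Xgen k q) (Ygen k q) := by
  simpa [SkewCommute, Xgen, Ygen] using (RingQuot.mkAlgHom_rel k (QSARel.YX (k := k) (q := q))).symm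

theorem Egen_mul_Ygen : Egen k q * Ygen k q = Xgen k q + q⁻¹ • (Ygen k q * Egen k q) := by
  simpa [Egen, Xgen, Ygen] using RingQuot.mkAlgHom_rel k (QSARel.EY (k := k) (q := q))

theorem Ygen_skewCommute_Xgen (hq : q ≠ 0) : SkewCommute q⁻¹ (Ygen k q) (Xgen k q) :=
  Xgen_skewCommute_Ygen.symm (mul_inv_cancel₀ hq)

theorem phi_eq : phi k q = Xgen k q + (q⁻¹ - q) • (Ygen k q * Egen k q) := by
  rw [phi, Egen_mul_Ygen]
  module

theorem phi_skewCommute_Kgen (hq : q ≠ 0) : SkewCommute q⁻¹ (phi k q) (Kgen k q) := by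
  have hYE := Ygen_skewCommute_Kgen.mul_left (Egen_skewCommute_Kgen (q := q))
  rw [show q * (q ^ 2)⁻¹ = q⁻¹ by field_simp] at hYE
  rw [phi_eq]
  exact Xgen_skewCommute_Kgen.add_left (hYE.smul_left _)

theorem phi_skewCommute_Xgen (hq : q ≠ 0) : SkewCommute (1 : k) (phi k q) (Xgen k q) := by
  have hYE := (Ygen_skewCommute_Xgen hq).mul_left Egen_skewCommute_Xgen
  rw [inv_mul_cancel₀ hq] at hYE
  rw [phi_eq]
  exact (SkewCommute.refl k _).add_left (hYE.smul_left _)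

theorem phi_skewCommute_Ygen : SkewCommute q⁻¹ (phi k q) (Ygen k q) := by
  have hXY : Xgen k q * Ygen k q = q • (Ygen k q * Xgen k q) := Xgen_skewCommute_Ygen
  rw [SkewCommute, phi_eq]
  simp only [add_mul, mul_add, smul_mul_assoc, mul_smul_comm, mul_assoc, Egen_mul_Ygen, hXY]
  module

end QuantumSpatialAgeing

theorem stmt17_general (k : Type) [Field k] (q : k) (hq : q ≠ 0) :
    (Ygen k q * Xgen k q) * Kgen k q = Kgen k q * (Ygen k q * Xgen k q) ∧
    (Ygen k q * phi k q) * Kgen k q = Kgen k q * (Ygen k q * phi k q) ∧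
    (Ygen k q * Xgen k q) * (Ygen k q * phi k q) =
      q ^ 2 • ((Ygen k q * phi k q) * (Ygen k q * Xgen k q)) := by
  have hYX_K : SkewCommute (1 : k) (Ygen k q * Xgen k q) (Kgen k q) :=
    mul_inv_cancel₀ hq ▸ Ygen_skewCommute_Kgen.mul_left Xgen_skewCommute_Kgen
  have hYphi_K : SkewCommute (1 : k) (Ygen k q * phi k q) (Kgen k q) :=
    mul_inv_cancel₀ hq ▸ Ygen_skewCommute_Kgen.mul_left (phi_skewCommute_Kgen hq)
  have hYX_Y : SkewCommute q (Ygen k q * Xgen k q) (Ygen k q) := by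
    simpa only [one_mul] using (SkewCommute.refl k _).mul_left Xgen_skewCommute_Ygen
  have hYX_phi : SkewCommute q (Ygen k q * Xgen k q) (phi k q) := by
    simpa only [mul_one] using
      (phi_skewCommute_Ygen.symm (inv_mul_cancel₀ hq)).mul_left
        ((phi_skewCommute_Xgen hq).symm (one_mul 1))
  exact ⟨hYX_K.commute.eq, hYphi_K.commute.eq, sq q ▸ hYX_Y.mul_right hYX_phi⟩

/-- `t = YX` and `u = Yφ` commute with `K` and `tu = q²ut`. -/
theorem stmt17 (k : Type) [Field k] (q : k) (hq : q ≠ 0)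
    (hq' : ∀ n : ℕ, n ≠ 0 → q ^ n ≠ 1) :
    (Ygen k q * Xgen k q) * Kgen k q = Kgen k q * (Ygen k q * Xgen k q) ∧
    (Ygen k q * phi k q) * Kgen k q = Kgen k q * (Ygen k q * phi k q) ∧
    (Ygen k q * Xgen k q) * (Ygen k q * phi k q) =
      q ^ 2 • ((Ygen k q * phi k q) * (Ygen k q * Xgen k q)) :=
  stmt17_general k q hq
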